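/- Let f : N → P be a smooth map between closed n- and p-manifolds, and suppose the germ of f at x, in suitable coordinates on ℝ^{n+1} and ℝ^{p+1} of the stabilized map f × id_ℝ, is z = j₀^k g with g not in Σ^{n+1}(n+1,p+1). Then there exist coordinate hyperplanes V ⊂ ℝ^{n+1}, W ⊂ ℝ^{p+1} and a restricted germ f̄ : (ℝ^n,0) → (ℝ^p,0) such that the local algebras satisfy Q(z) ≅ Q(j₀^k f̄). -/

import Mathlib

/-!
STATEMENT 17.  Let `z = j₀^k g` be the `k`-jet of a (stabilized) map germ
`g : (ℝ^{n+1},0) → (ℝ^{p+1},0)` not lying in `Σ^{n+1}(n+1,p+1)` (i.e., with nonzero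
differential at the origin).  Then there is a germ `f̄ : (ℝ^n,0) → (ℝ^p,0)` in one
lower dimension whose local algebras agree: `Q(z) ≅ Q(j₀^k f̄)`.

Jets are represented by tuples of polynomials with zero constant coefficient, and
`Q(z) = ℝ[x]/((components of z) + 𝔪^{k+1})`.
-/

noncomputable section
open MvPolynomial

/-- The maximal ideal `𝔪_m = (x₁,…,x_m)` of `ℝ[x₁,…,x_m]`. -/
def mIdeal (m : ℕ) : Ideal (MvPolynomial (Fin m) ℝ) :=
  Ideal.span (Set.range MvPolynomial.X)

/-- The ideal `(f₁,…,f_q) + 𝔪_m^{k+1}` of a `k`-jet. -/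
def jetIdeal (m q k : ℕ) (f : Fin q → MvPolynomial (Fin m) ℝ) :
    Ideal (MvPolynomial (Fin m) ℝ) :=
  Ideal.span (Set.range f) ⊔ (mIdeal m) ^ (k + 1)

/-- The local algebra `Q(z) = ℝ[x₁,…,x_m]/((f₁,…,f_q) + 𝔪_m^{k+1})` of a `k`-jet. -/
abbrev JetAlgebra (m q k : ℕ) (f : Fin q → MvPolynomial (Fin m) ℝ) : Type :=
  MvPolynomial (Fin m) ℝ ⧸ jetIdeal m q k f

/-!
Since `g i₀` has a nonzero linear coefficient in `x_j`, Newton's iteration solves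
`g i₀ (y, ψ(y)) ≡ 0 mod 𝔪ᵏ⁺¹` for a polynomial `ψ ∈ 𝔪` in the remaining variables `y`.
Restricting to the graph `x_j = ψ(y)` is a surjection `ℝ[x] → ℝ[y]` with kernel generated by
`x_j - ψ(y)`. A first-order Taylor expansion of `g i₀` along the graph puts this generator into the
jet ideal of `g` up to an error in `(x_j - ψ(y)) · 𝔪`, so it lies there outright because `𝔪ᵏ⁺¹`
does. Hence the jet ideal contains the kernel, and it maps onto the jet ideal of the restricted
remaining components, which gives the isomorphism of local algebras.
-/

theorem mIdeal_eq_idealOfVars (m : ℕ) : mIdeal m = idealOfVars (Fin m) ℝ := rfl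

theorem Ideal.le_of_le_sup_mul_of_pow_le {R : Type*} [CommSemiring R] {J K M : Ideal R} {N : ℕ}
    (h : K ≤ J ⊔ K * M) (hM : M ^ N ≤ J) : K ≤ J := by
  have key : ∀ s, K ≤ J ⊔ K * M ^ s := by
    intro s
    induction s with
    | zero => simp
    | succ s ih =>
      calc K ≤ J ⊔ K * M ^ s := ih
        _ ≤ J ⊔ (J ⊔ K * M) * M ^ s := sup_le_sup_left (Ideal.mul_mono_left h) _
        _ = J ⊔ (J * M ^ s ⊔ K * M ^ (s + 1)) := by rw [Ideal.sup_mul, pow_succ', mul_assoc]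
        _ ≤ J ⊔ K * M ^ (s + 1) := by
          rw [← sup_assoc, sup_eq_left.2 (Ideal.mul_le_left : J * M ^ s ≤ J)]
  exact (key N).trans (sup_le le_rfl (Ideal.mul_le_right.trans hM))

def Ideal.quotientMapAlgEquivOfSurjective {R A B : Type*} [CommRing R] [CommRing A]
    [CommRing B] [Algebra R A] [Algebra R B] {f : A →ₐ[R] B} (hf : Function.Surjective f)
    {J : Ideal A} (hJ : RingHom.ker f ≤ J) : (A ⧸ J) ≃ₐ[R] B ⧸ J.map f :=
  AlgEquiv.ofBijective (Ideal.quotientMapₐ _ f Ideal.le_comap_map)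
    ⟨Ideal.quotientMap_injective' (H := Ideal.le_comap_map)
        ((Ideal.comap_map_of_surjective' (f : A →+* B) hf J).trans_le (sup_le le_rfl hJ)),
      Ideal.quotientMap_surjective (H := Ideal.le_comap_map) hf⟩

namespace MvPolynomial

section Evaluation

variable {σ R A : Type*} [CommRing R] [CommRing A] [Algebra R A]

theorem mem_idealOfVars_iff_constantCoeff_eq_zero {p : MvPolynomial σ R} :
    p ∈ idealOfVars σ R ↔ constantCoeff p = 0 := by
  rw [← pow_one (idealOfVars σ R), mem_pow_idealOfVars_iff']
  simp [Finsupp.degree_eq_zero_iff, constantCoeff_eq]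

theorem aeval_mem_pow {w : σ → A} {I : Ideal A} (hw : ∀ i, w i ∈ I) {s : ℕ}
    {h : MvPolynomial σ R} (hh : h ∈ idealOfVars σ R ^ s) : aeval w h ∈ I ^ s := by
  have hmap : (idealOfVars σ R).map (aeval w) ≤ I := by
    rw [Ideal.map_span, Ideal.span_le]
    rintro _ ⟨_, ⟨i, rfl⟩, rfl⟩
    simpa using hw i
  have hmap_pow : (idealOfVars σ R ^ s).map (aeval w) ≤ I ^ s := by
    rw [Ideal.map_pow]
    exact Ideal.pow_right_mono hmap s
  exact hmap_pow (Ideal.mem_map_of_mem _ hh)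

theorem rename_mem_pow_idealOfVars {τ : Type*} (f : σ → τ) {s : ℕ} {h : MvPolynomial σ R}
    (hh : h ∈ idealOfVars σ R ^ s) : rename f h ∈ idealOfVars τ R ^ s := by
  rw [rename_eq_aeval]
  exact aeval_mem_pow (fun i => Ideal.subset_span (Set.mem_range_self (f i))) hh

theorem aeval_sub_algebraMap_constantCoeff_mem {w : σ → A} {I : Ideal A} (hw : ∀ i, w i ∈ I)
    (h : MvPolynomial σ R) : aeval w h - algebraMap R A (constantCoeff h) ∈ I := by
  induction h using MvPolynomial.induction_on with
  | C r => simp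
  | add p q hp hq => simpa [add_sub_add_comm] using I.add_mem hp hq
  | mul_X p i _ => simpa using I.mul_mem_left (aeval w p) (hw i)

variable {v w : σ → A} {j : σ}

theorem aeval_sub_aeval_mem_span_singleton (hvw : ∀ i ≠ j, v i = w i) (h : MvPolynomial σ R) :
    aeval v h - aeval w h ∈ Ideal.span {v j - w j} := by
  induction h using MvPolynomial.induction_on with
  | C r => simp
  | add p q hp hq => simpa [add_sub_add_comm] using Ideal.add_mem _ hp hq
  | mul_X p i hp =>
    have hi : v i - w i ∈ Ideal.span {v j - w j} := by
      rcases eq_or_ne i j with rfl | hij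
      · exact Ideal.mem_span_singleton_self _
      · simp [hvw i hij]
    have hsplit : aeval v (p * X i) - aeval w (p * X i)
        = (aeval v p - aeval w p) * v i + aeval w p * (v i - w i) := by
      simp only [map_mul, aeval_X]
      ring
    rw [hsplit]
    exact add_mem (Ideal.mul_mem_right _ _ hp) (Ideal.mul_mem_left _ _ hi)

/-- First-order Taylor expansion in the variable `j`: apart from `X j` itself, the increment of
every monomial is a multiple of `v j - w j` carrying a further factor from `I`. -/
theorem aeval_sub_aeval_sub_coeff_smul_mem {I : Ideal A}
    (hvw : ∀ i ≠ j, v i = w i) (hv : ∀ i, v i ∈ I) (hw : ∀ i, w i ∈ I) (h : MvPolynomial σ R) :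
    aeval v h - aeval w h - coeff (Finsupp.single j 1) h • (v j - w j) ∈
      Ideal.span {v j - w j} * I := by
  classical
  induction h using MvPolynomial.induction_on with
  | C r => simp [coeff_C, Ne.symm (Finsupp.single_ne_zero.2 one_ne_zero)]
  | add p q hp hq =>
    convert add_mem hp hq using 1
    simp only [map_add, coeff_add, add_smul]
    ring
  | mul_X p i _ =>
    have hp := Ideal.mul_mem_mul (aeval_sub_aeval_mem_span_singleton hvw p) (hv i)
    rcases eq_or_ne i j with rfl | hij
    · have hc : (aeval w p - algebraMap R A (constantCoeff p)) * (v i - w i) ∈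
          Ideal.span {v i - w i} * I :=
        Ideal.mul_mem_mul_rev (Ideal.mem_span_singleton_self _)
          (aeval_sub_algebraMap_constantCoeff_mem hw p)
      convert add_mem hp hc using 1
      simp [coeff_mul_X', constantCoeff_eq, Algebra.smul_def]
      ring
    · convert hp using 1
      simp [coeff_mul_X', hvw i hij, hij, sub_mul]

end Evaluation

section Graph

variable {R : Type*} [CommRing R] {n : ℕ} (j : Fin (n + 1)) (ψ : MvPolynomial (Fin n) R)

/-- The parametrisation `y ↦ (y₀, …, ψ(y), …, y_{n-1})` of the graph `x_j = ψ(y)`. -/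
def graphParam : Fin (n + 1) → MvPolynomial (Fin n) R :=
  Fin.insertNth j ψ X

def restrictToGraph : MvPolynomial (Fin (n + 1)) R →ₐ[R] MvPolynomial (Fin n) R :=
  aeval (graphParam j ψ)

def graphEquation : MvPolynomial (Fin (n + 1)) R :=
  X j - rename j.succAbove ψ

@[simp]
theorem restrictToGraph_rename_succAbove (q : MvPolynomial (Fin n) R) :
    restrictToGraph j ψ (rename j.succAbove q) = q := by
  rw [restrictToGraph, aeval_rename, graphParam, Fin.insertNth_comp_succAbove, aeval_X_left_apply]

theorem restrictToGraph_surjective : Function.Surjective (restrictToGraph j ψ) :=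
  fun q => ⟨_, restrictToGraph_rename_succAbove j ψ q⟩

theorem restrictToGraph_apply (h : MvPolynomial (Fin (n + 1)) R) :
    restrictToGraph j ψ h = aeval (graphParam j ψ) h :=
  rfl

@[simp]
theorem restrictToGraph_X (i : Fin (n + 1)) : restrictToGraph j ψ (X i) = graphParam j ψ i :=
  aeval_X _ _

@[simp]
theorem graphParam_self : graphParam j ψ j = ψ :=
  Fin.insertNth_apply_same _ _ _

@[simp]
theorem graphParam_succAbove (m : Fin n) : graphParam j ψ (j.succAbove m) = X m :=
  Fin.insertNth_apply_succAbove _ _ _ _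

theorem graphParam_congr_of_ne (ψ' : MvPolynomial (Fin n) R) {i : Fin (n + 1)} (hi : i ≠ j) :
    graphParam j ψ i = graphParam j ψ' i := by
  obtain ⟨m, rfl⟩ := Fin.exists_succAbove_eq hi
  simp

theorem X_eq_rename_graphParam_of_ne {i : Fin (n + 1)} (hi : i ≠ j) :
    X i = rename j.succAbove (graphParam j ψ i) := by
  obtain ⟨m, rfl⟩ := Fin.exists_succAbove_eq hi
  simp

theorem rename_restrictToGraph (h : MvPolynomial (Fin (n + 1)) R) :
    rename j.succAbove (restrictToGraph j ψ h) =
      aeval (fun i => rename j.succAbove (graphParam j ψ i)) h := by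
  rw [restrictToGraph, ← AlgHom.comp_apply, comp_aeval]

theorem graphParam_mem_idealOfVars (hψ : ψ ∈ idealOfVars (Fin n) R) :
    ∀ i, graphParam j ψ i ∈ idealOfVars (Fin n) R := by
  refine (Fin.forall_iff_succAbove j).2 ⟨by simpa [graphParam] using hψ, fun m => ?_⟩
  simpa [graphParam] using Ideal.subset_span (Set.mem_range_self m)

theorem restrictToGraph_mem_pow (hψ : ψ ∈ idealOfVars (Fin n) R) {s : ℕ}
    {h : MvPolynomial (Fin (n + 1)) R} (hh : h ∈ idealOfVars (Fin (n + 1)) R ^ s) :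
    restrictToGraph j ψ h ∈ idealOfVars (Fin n) R ^ s :=
  aeval_mem_pow (graphParam_mem_idealOfVars j ψ hψ) hh

theorem constantCoeff_restrictToGraph_eq_zero (hψ : ψ ∈ idealOfVars (Fin n) R)
    {h : MvPolynomial (Fin (n + 1)) R} (hh : constantCoeff h = 0) :
    constantCoeff (restrictToGraph j ψ h) = 0 := by
  rw [← mem_idealOfVars_iff_constantCoeff_eq_zero] at hh ⊢
  simpa using restrictToGraph_mem_pow j ψ hψ (s := 1) (by simpa using hh)

theorem map_restrictToGraph_pow_idealOfVars (hψ : ψ ∈ idealOfVars (Fin n) R) (s : ℕ) :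
    (idealOfVars (Fin (n + 1)) R ^ s).map (restrictToGraph j ψ) = idealOfVars (Fin n) R ^ s := by
  refine le_antisymm (Ideal.map_le_iff_le_comap.2 fun _ => restrictToGraph_mem_pow j ψ hψ)
    fun q hq => ?_
  rw [← restrictToGraph_rename_succAbove j ψ q]
  exact Ideal.mem_map_of_mem _ (rename_mem_pow_idealOfVars _ hq)

theorem sub_rename_restrictToGraph_mem_span (h : MvPolynomial (Fin (n + 1)) R) :
    h - rename j.succAbove (restrictToGraph j ψ h) ∈ Ideal.span {graphEquation j ψ} := by
  simpa [rename_restrictToGraph, graphEquation] using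
    aeval_sub_aeval_mem_span_singleton (fun i hi => X_eq_rename_graphParam_of_ne j ψ hi) h

theorem ker_restrictToGraph :
    RingHom.ker (restrictToGraph j ψ) = Ideal.span {graphEquation j ψ} := by
  refine le_antisymm (fun h hh => ?_) ?_
  · simpa [RingHom.mem_ker.1 hh] using sub_rename_restrictToGraph_mem_span j ψ h
  · rw [Ideal.span_singleton_le_iff_mem, RingHom.mem_ker]
    simp [graphEquation]

theorem sub_rename_restrictToGraph_sub_smul_mem (hψ : ψ ∈ idealOfVars (Fin n) R)
    (h : MvPolynomial (Fin (n + 1)) R) :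
    h - rename j.succAbove (restrictToGraph j ψ h) -
        coeff (Finsupp.single j 1) h • graphEquation j ψ ∈
      Ideal.span {graphEquation j ψ} * idealOfVars (Fin (n + 1)) R := by
  have hX (i : Fin (n + 1)) : X i ∈ idealOfVars (Fin (n + 1)) R :=
    Ideal.subset_span (Set.mem_range_self i)
  have hw (i : Fin (n + 1)) :
      rename j.succAbove (graphParam j ψ i) ∈ idealOfVars (Fin (n + 1)) R := by
    simpa using rename_mem_pow_idealOfVars (s := 1) j.succAbove
      (by simpa using graphParam_mem_idealOfVars j ψ hψ i)
  simpa [rename_restrictToGraph, graphEquation] using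
    aeval_sub_aeval_sub_coeff_smul_mem (fun i hi => X_eq_rename_graphParam_of_ne j ψ hi) hX hw h

theorem exists_restrictToGraph_mem_pow {g : MvPolynomial (Fin (n + 1)) R}
    (hg : constantCoeff g = 0) (hc : IsUnit (coeff (Finsupp.single j 1) g)) (s : ℕ) :
    ∃ ψ ∈ idealOfVars (Fin n) R, restrictToGraph j ψ g ∈ idealOfVars (Fin n) R ^ (s + 1) := by
  induction s with
  | zero =>
    refine ⟨0, zero_mem _, ?_⟩
    simpa [mem_idealOfVars_iff_constantCoeff_eq_zero] using
      constantCoeff_restrictToGraph_eq_zero j 0 (zero_mem _) hg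
  | succ s ih =>
    obtain ⟨ψ, hψ, hgψ⟩ := ih
    set e := restrictToGraph j ψ g
    set ψ' := ψ - (↑hc.unit⁻¹ : R) • e
    have he : e ∈ idealOfVars (Fin n) R := Ideal.pow_le_self s.succ_ne_zero hgψ
    have hψ' : ψ' ∈ idealOfVars (Fin n) R := sub_mem hψ (Submodule.smul_of_tower_mem _ _ he)
    have hstep : ψ' - ψ = -((↑hc.unit⁻¹ : R) • e) := sub_sub_cancel_left _ _
    have hlin : coeff (Finsupp.single j 1) g • (ψ' - ψ) = -e := by
      rw [hstep, smul_neg, smul_smul, IsUnit.mul_val_inv, one_smul]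
    have htaylor : restrictToGraph j ψ' g - e - coeff (Finsupp.single j 1) g • (ψ' - ψ) ∈
        Ideal.span {ψ' - ψ} * idealOfVars (Fin n) R := by
      simpa only [graphParam_self, ← restrictToGraph_apply] using
        aeval_sub_aeval_sub_coeff_smul_mem (v := graphParam j ψ') (w := graphParam j ψ)
          (fun i hi => graphParam_congr_of_ne j ψ' ψ hi) (graphParam_mem_idealOfVars j ψ' hψ')
          (graphParam_mem_idealOfVars j ψ hψ) g
    have hspan : Ideal.span {ψ' - ψ} ≤ idealOfVars (Fin n) R ^ (s + 1) := by
      rw [Ideal.span_singleton_le_iff_mem, hstep]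
      exact neg_mem (Submodule.smul_of_tower_mem _ _ hgψ)
    refine ⟨ψ', hψ', ?_⟩
    rw [hlin, sub_neg_eq_add, sub_add_cancel] at htaylor
    rw [pow_succ]
    exact Ideal.mul_mono_left hspan htaylor

end Graph

end MvPolynomial

section Jet

variable {n p k : ℕ} {g : Fin (p + 1) → MvPolynomial (Fin (n + 1)) ℝ} {i₀ : Fin (p + 1)}
  (j : Fin (n + 1)) {ψ : MvPolynomial (Fin n) ℝ}

theorem graphEquation_mem_jetIdeal (hψ : ψ ∈ mIdeal n)
    (hc : coeff (Finsupp.single j 1) (g i₀) ≠ 0)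
    (hgψ : restrictToGraph j ψ (g i₀) ∈ mIdeal n ^ (k + 1)) :
    graphEquation j ψ ∈ jetIdeal (n + 1) (p + 1) k g := by
  set J := jetIdeal (n + 1) (p + 1) k g
  set d := graphEquation j ψ
  have hgJ : g i₀ - rename j.succAbove (restrictToGraph j ψ (g i₀)) ∈ J :=
    sub_mem (Ideal.mem_sup_left (Ideal.subset_span ⟨i₀, rfl⟩))
      (Ideal.mem_sup_right (rename_mem_pow_idealOfVars _ hgψ))
  have hcd : coeff (Finsupp.single j 1) (g i₀) • d ∈
      J ⊔ Ideal.span {d} * idealOfVars (Fin (n + 1)) ℝ := by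
    simpa using sub_mem (Ideal.mem_sup_left hgJ)
      (Ideal.mem_sup_right (sub_rename_restrictToGraph_sub_smul_mem j ψ hψ (g i₀)))
  have hd : d ∈ J ⊔ Ideal.span {d} * idealOfVars (Fin (n + 1)) ℝ := by
    simpa [smul_smul, inv_mul_cancel₀ hc] using
      Submodule.smul_of_tower_mem _ (coeff (Finsupp.single j 1) (g i₀))⁻¹ hcd
  exact Ideal.le_of_le_sup_mul_of_pow_le ((Ideal.span_singleton_le_iff_mem _).2 hd) le_sup_right
    (Ideal.mem_span_singleton_self d)

theorem map_restrictToGraph_jetIdeal (hψ : ψ ∈ mIdeal n)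
    (hgψ : restrictToGraph j ψ (g i₀) ∈ mIdeal n ^ (k + 1)) :
    (jetIdeal (n + 1) (p + 1) k g).map (restrictToGraph j ψ) =
      jetIdeal n p k fun m => restrictToGraph j ψ (g (i₀.succAbove m)) := by
  rw [jetIdeal, jetIdeal, Ideal.map_sup, mIdeal_eq_idealOfVars, mIdeal_eq_idealOfVars,
    map_restrictToGraph_pow_idealOfVars j ψ hψ]
  refine le_antisymm (sup_le ?_ le_sup_right) (sup_le ?_ le_sup_right)
  · rw [Ideal.map_span, Ideal.span_le]
    rintro _ ⟨_, ⟨i, rfl⟩, rfl⟩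
    rcases eq_or_ne i i₀ with rfl | hi
    · exact Ideal.mem_sup_right hgψ
    · obtain ⟨m, rfl⟩ := Fin.exists_succAbove_eq hi
      exact Ideal.mem_sup_left (Ideal.subset_span ⟨m, rfl⟩)
  · rw [Ideal.span_le]
    rintro _ ⟨m, rfl⟩
    exact Ideal.mem_sup_left (Ideal.mem_map_of_mem _ (Ideal.subset_span ⟨_, rfl⟩))

end Jet

/-- If the jet `z` of `g : (ℝ^{n+1},0) → (ℝ^{p+1},0)` has nonzero
differential at `0` (is not in `Σ^{n+1}`), then after restricting to suitable
coordinate hyperplanes there is a germ `f̄ : (ℝ^n,0) → (ℝ^p,0)` with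
`Q(z) ≅ Q(j₀^k f̄)` as `ℝ`-algebras. -/
theorem exists_lower_dimensional_jet_with_isomorphic_local_algebra
    (n p k : ℕ) (g : Fin (p + 1) → MvPolynomial (Fin (n + 1)) ℝ)
    (hg0 : ∀ i, MvPolynomial.constantCoeff (g i) = 0)
    (hreg : ∃ (i : Fin (p + 1)) (j : Fin (n + 1)),
      MvPolynomial.coeff (Finsupp.single j 1) (g i) ≠ 0) :
    ∃ fbar : Fin p → MvPolynomial (Fin n) ℝ,
      (∀ i, MvPolynomial.constantCoeff (fbar i) = 0) ∧
      Nonempty (JetAlgebra (n + 1) (p + 1) k g ≃ₐ[ℝ] JetAlgebra n p k fbar) := by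
  obtain ⟨i₀, j, hc⟩ := hreg
  obtain ⟨ψ, hψ, hgψ⟩ := exists_restrictToGraph_mem_pow j (hg0 i₀) hc.isUnit k
  refine ⟨fun m => restrictToGraph j ψ (g (i₀.succAbove m)), fun m => ?_, ⟨?_⟩⟩
  · exact constantCoeff_restrictToGraph_eq_zero j ψ hψ (hg0 _)
  · have hker : RingHom.ker (restrictToGraph j ψ) ≤ jetIdeal (n + 1) (p + 1) k g := by
      rw [ker_restrictToGraph, Ideal.span_singleton_le_iff_mem]
      exact graphEquation_mem_jetIdeal j hψ hc hgψ
    exact (Ideal.quotientMapAlgEquivOfSurjective (restrictToGraph_surjective j ψ) hker).trans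
      (Ideal.quotientEquivAlgOfEq ℝ (map_restrictToGraph_jetIdeal j hψ hgψ))
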